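/- arXiv:0704.2282 — 2 statements merged into one kernel-verified Lean document; each statement's English description precedes it below -/
import Mathlib

section
/- Let G be a graph with port set P = pG, let g ⊆ P be a port assignment, and let n be the number of Kekulé states W of G with W|P = g. Then for every Kekulé state W of G with W|P = g, there are precisely n curves C in G, none of whose nodes is a port of G, such that (C, W) is an alternating curve (the empty curve counted among them). -/
/-!
Flipping along symmetric differences: for Kekulé states `W, W'` with the same port assignment,
every internal node lies in one edge of each, so `W ∆ W'` has degree `0` or `2` there (with
exactly one of its edges in `W`) and no edge at a port, since a port lies in a single edge of
`G`. Conversely, flipping `W` along a port-free alternating curve `C` swaps the `W`-edge at each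
node of `C` for the other curve edge and changes nothing at the ports. As `W ∆ (W ∆ X) = X`,
`W' ↦ W ∆ W'` is a bijection between the two sets being counted, with `W ↦ ∅`.
-/

open scoped symmDiff

namespace Kekule

abbrev Node := ℕ
abbrev Graph := Finset (Finset Node)

/-- `G` is a graph: every edge is a 2-element set of nodes. -/
def IsGraph (G : Graph) : Prop := ∀ e ∈ G, e.card = 2

/-- The nodes of a graph: the elements of its edges. -/
def nodes (G : Graph) : Finset Node := G.biUnion id

/-- The number of edges of `G` containing `v`. -/
def deg (G : Graph) (v : Node) : ℕ := (G.filter (fun e => v ∈ e)).card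

/-- A port is a node contained in exactly one edge. -/
def ports (G : Graph) : Finset Node := (nodes G).filter (fun v => deg G v = 1)

/-- An internal node is a node that is not a port. -/
def internal (G : Graph) : Finset Node := (nodes G).filter (fun v => deg G v ≠ 1)

/-- A Kekulé state of `G`: a subgraph `W ⊆ G` such that every internal node
of `G` lies in exactly one edge of `W`. -/
def IsKekule (G W : Graph) : Prop := W ⊆ G ∧ ∀ v ∈ internal G, deg W v = 1

/-- A curve in `G`: a subgraph `C ⊆ G` such that every node of `C` that is
internal in `G` lies in exactly two edges of `C`. -/
def IsCurve (G C : Graph) : Prop :=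
  C ⊆ G ∧ ∀ v ∈ nodes C, v ∈ internal G → deg C v = 2

/-- `(C, W)` is an alternating curve in `G`: both are subgraphs of `G`,
`C` is a curve in `G`, and `W ∩ C` is a Kekulé state of `C`. -/
def IsAlternating (G C W : Graph) : Prop :=
  W ⊆ G ∧ IsCurve G C ∧ IsKekule C (W ∩ C)

/-- `W|P`: the set of ports in `P` that lie in some edge of `W`. -/
def rest (W : Graph) (P : Finset Node) : Finset Node := P ∩ nodes W

/-- The set of Kekulé port assignments of `G`. -/
def KP (G : Graph) : Set (Finset Node) :=
  {g | ∃ W, IsKekule G W ∧ rest W (ports G) = g}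

/-- A cell `K` over `P` is a Kekulé cell if it is the set of Kekulé port
assignments of some graph with port set `P`. -/
def IsKekuleCell (P : Finset Node) (K : Set (Finset Node)) : Prop :=
  ∃ G, IsGraph G ∧ ports G = P ∧ KP G = K

/-- A channel: a 2-element subset of `P`. -/
def IsChannel (P : Finset Node) (c : Finset Node) : Prop := c ⊆ P ∧ c.card = 2

/-- A port `p` is flexible for a cell `K`. -/
def Flexible (K : Set (Finset Node)) (p : Node) : Prop :=
  ∃ g ∈ K, ∃ g' ∈ K, p ∈ g ∧ p ∉ g'

/-- Hamming distance between two port assignments. -/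
def hdist (k k' : Finset Node) : ℕ := (k ∆ k').card

/-- The Hamming diameter of `K` equals `n`. -/
def HamDiamEq (K : Set (Finset Node)) (n : ℕ) : Prop :=
  (∃ k ∈ K, ∃ k' ∈ K, hdist k k' = n) ∧ ∀ k ∈ K, ∀ k' ∈ K, hdist k k' ≤ n

/-- `G` is connected: nonempty, and any two distinct nodes are joined by a walk. -/
def Connected (G : Graph) : Prop :=
  G.Nonempty ∧ ∀ p ∈ nodes G, ∀ q ∈ nodes G, p ≠ q →
    ∃ (n : ℕ) (f : ℕ → Node), f 0 = p ∧ f n = q ∧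
      ∀ i < n, ({f i, f (i + 1)} : Finset Node) ∈ G

/-- `C` is a simple path between `p` and `q`. -/
def IsSimplePath (C : Graph) (p q : Node) : Prop :=
  Connected C ∧ ports C = {p, q} ∧
    ∀ v ∈ nodes C, v ≠ p → v ≠ q → deg C v = 2

/-- A cycle: a connected graph all of whose nodes lie in exactly two edges. -/
def IsCycle (C : Graph) : Prop :=
  Connected C ∧ ∀ v ∈ nodes C, deg C v = 2

/-- A semi-Kekulé state of `G`: every internal node of `G` lies in an odd
number of edges of `W`. -/
def IsSemiKekule (G W : Graph) : Prop :=
  W ⊆ G ∧ ∀ v ∈ internal G, deg W v % 2 = 1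

/-- The signature of `G`. -/
def sig (G : Graph) : ℕ := (internal G).card % 2

/-- `G` is omniconjugated. -/
def Omniconjugated (G : Graph) : Prop :=
  2 ≤ (ports G).card ∧ KP G = {g | g ⊆ ports G ∧ g.card % 2 = sig G}

instance : Std.Commutative (α := Finset Node) (· ∆ ·) := ⟨symmDiff_comm⟩
instance : Std.Associative (α := Finset Node) (· ∆ ·) := ⟨symmDiff_assoc⟩

/-- The `⊕`-sum of a finite family of port assignments. -/
def xorSum (D : Finset (Finset Node)) : Finset Node := D.fold (· ∆ ·) ∅ id

section Finset

variable {α : Type*} [DecidableEq α]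

lemma filter_symmDiff_distrib (s t : Finset α) (p : α → Prop) [DecidablePred p] :
    (s ∆ t).filter p = s.filter p ∆ t.filter p := by
  ext x
  simp only [Finset.mem_filter, Finset.mem_symmDiff]
  tauto

lemma card_symmDiff_of_card_eq_one {s t : Finset α} (hs : s.card = 1) (ht : t.card = 1)
    (hst : s ≠ t) : (s ∆ t).card = 2 ∧ (s ∩ (s ∆ t)).card = 1 := by
  obtain ⟨a, rfl⟩ := Finset.card_eq_one.1 hs
  obtain ⟨b, rfl⟩ := Finset.card_eq_one.1 ht
  have hab : a ≠ b := fun h => hst (h ▸ rfl)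
  have hsymm : ({a} : Finset α) ∆ {b} = {a, b} := by
    ext x
    simp only [Finset.mem_symmDiff, Finset.mem_singleton, Finset.mem_insert]
    constructor
    · tauto
    · rintro (rfl | rfl) <;> simp [hab, hab.symm]
  rw [hsymm, Finset.card_pair hab, Finset.inter_eq_left.2 (by simp)]
  exact ⟨rfl, Finset.card_singleton a⟩

lemma card_symmDiff_of_card_inter {s t : Finset α} (hs : s.card = 1) (ht : t.card = 2)
    (hst : (s ∩ t).card = 1) : (s ∆ t).card = 1 := by
  have hsub : s ⊆ t := Finset.inter_eq_left.1 <|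
    Finset.eq_of_subset_of_card_le Finset.inter_subset_left (by rw [hst, hs])
  rw [symmDiff_of_le hsub, Finset.card_sdiff_of_subset hsub, ht, hs]

end Finset

lemma mem_nodes_iff {X : Graph} {v : Node} : v ∈ nodes X ↔ ∃ e ∈ X, v ∈ e := by
  simp [nodes]

lemma filter_mem_nonempty_iff {X : Graph} {v : Node} :
    (X.filter (fun e => v ∈ e)).Nonempty ↔ v ∈ nodes X := by
  simp [Finset.filter_nonempty_iff, mem_nodes_iff]

lemma filter_mem_eq_empty {X : Graph} {v : Node} (hv : v ∉ nodes X) :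
    X.filter (fun e => v ∈ e) = ∅ :=
  Finset.not_nonempty_iff_eq_empty.1 (mt filter_mem_nonempty_iff.1 hv)

lemma filter_mem_symmDiff_of_notMem {W C : Graph} {v : Node} (hv : v ∉ nodes C) :
    (W ∆ C).filter (fun e => v ∈ e) = W.filter (fun e => v ∈ e) := by
  rw [filter_symmDiff_distrib, filter_mem_eq_empty hv]
  exact symmDiff_bot _

lemma nodes_mono {C G : Graph} (h : C ⊆ G) : nodes C ⊆ nodes G :=
  Finset.biUnion_subset_biUnion_of_subset_left id h

lemma mem_internal_iff {G : Graph} {v : Node} :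
    v ∈ internal G ↔ v ∈ nodes G ∧ v ∉ ports G := by
  simp only [internal, ports, Finset.mem_filter]
  tauto

lemma eq_of_mem_port {G : Graph} {p : Node} (hp : p ∈ ports G) {e e' : Finset Node}
    (he : e ∈ G) (hpe : p ∈ e) (he' : e' ∈ G) (hpe' : p ∈ e') : e = e' :=
  Finset.card_le_one.1 (Finset.mem_filter.1 hp).2.le e (Finset.mem_filter.2 ⟨he, hpe⟩)
    e' (Finset.mem_filter.2 ⟨he', hpe'⟩)

lemma notMem_nodes_symmDiff_of_port {G W W' : Graph} (hW : W ⊆ G) (hW' : W' ⊆ G)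
    {p : Node} (hp : p ∈ ports G) (hpW : p ∈ nodes W ↔ p ∈ nodes W') :
    p ∉ nodes (W ∆ W') := by
  intro hmem
  obtain ⟨e, he, hpe⟩ := mem_nodes_iff.1 hmem
  clear hmem
  wlog heW : e ∈ W ∧ e ∉ W' generalizing W W'
  · rw [symmDiff_comm] at he
    exact this hW' hW hpW.symm he ((Finset.mem_symmDiff.1 he).resolve_right heW)
  obtain ⟨e', he', hpe'⟩ := mem_nodes_iff.1 (hpW.1 (mem_nodes_iff.2 ⟨e, heW.1, hpe⟩))
  exact heW.2 (eq_of_mem_port hp (hW heW.1) hpe (hW' he') hpe' ▸ he')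

lemma rest_symmDiff_of_notMem {W C : Graph} {P : Finset Node} (hC : ∀ v ∈ nodes C, v ∉ P) :
    rest (W ∆ C) P = rest W P := by
  ext v
  simp only [rest, Finset.mem_inter, and_congr_right_iff]
  intro hvP
  rw [← filter_mem_nonempty_iff, ← filter_mem_nonempty_iff,
    filter_mem_symmDiff_of_notMem fun hv => hC v hv hvP]

section Flip

variable {G W W' C : Graph}

lemma IsKekule.notMem_ports_of_mem_nodes_symmDiff (hW : IsKekule G W) (hW' : IsKekule G W')
    (hrest : rest W (ports G) = rest W' (ports G)) : ∀ v ∈ nodes (W ∆ W'), v ∉ ports G := by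
  intro v hv hvP
  refine notMem_nodes_symmDiff_of_port hW.1 hW'.1 hvP ?_ hv
  simpa only [rest, Finset.mem_inter, hvP, true_and] using Finset.ext_iff.1 hrest v

lemma IsKekule.isAlternating_symmDiff (hW : IsKekule G W) (hW' : IsKekule G W')
    (hports : ∀ v ∈ nodes (W ∆ W'), v ∉ ports G) : IsAlternating G (W ∆ W') W := by
  have hCG : W ∆ W' ⊆ G := symmDiff_le_sup.trans (sup_le hW.1 hW'.1)
  have hdeg : ∀ v ∈ nodes (W ∆ W'), v ∈ internal G →
      deg (W ∆ W') v = 2 ∧ deg (W ∩ (W ∆ W')) v = 1 := by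
    intro v hv hvI
    have hne : W.filter (fun e => v ∈ e) ≠ W'.filter (fun e => v ∈ e) := by
      intro h
      have hnonempty := filter_mem_nonempty_iff.2 hv
      rw [filter_symmDiff_distrib, h, symmDiff_self] at hnonempty
      exact Finset.not_nonempty_empty hnonempty
    simpa only [deg, filter_symmDiff_distrib, Finset.filter_inter_distrib]
      using card_symmDiff_of_card_eq_one (hW.2 v hvI) (hW'.2 v hvI) hne
  refine ⟨hW.1, ⟨hCG, fun v hv hvI => (hdeg v hv hvI).1⟩, Finset.inter_subset_right, ?_⟩
  intro v hvI
  have hv : v ∈ nodes (W ∆ W') := (mem_internal_iff.1 hvI).1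
  exact (hdeg v hv (mem_internal_iff.2 ⟨nodes_mono hCG hv, hports v hv⟩)).2

lemma IsAlternating.isKekule_symmDiff (hW : IsKekule G W) (hC : IsAlternating G C W) :
    IsKekule G (W ∆ C) := by
  obtain ⟨-, ⟨hCG, hCdeg⟩, -, hWC⟩ := hC
  refine ⟨symmDiff_le_sup.trans (sup_le hW.1 hCG), fun v hvI => ?_⟩
  by_cases hv : v ∈ nodes C
  · have hCv : deg C v = 2 := hCdeg v hv hvI
    have hvIC : v ∈ internal C :=
      mem_internal_iff.2 ⟨hv, fun hp => by simp [ports, hCv] at hp⟩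
    have hWCv := hWC v hvIC
    simp only [deg, Finset.filter_inter_distrib] at hWCv hCv ⊢
    rw [filter_symmDiff_distrib]
    exact card_symmDiff_of_card_inter (hW.2 v hvI) hCv hWCv
  · rw [deg, filter_mem_symmDiff_of_notMem hv]
    exact hW.2 v hvI

def kekuleEquivAlternating (hW : IsKekule G W) :
    {W' : Graph // IsKekule G W' ∧ rest W' (ports G) = rest W (ports G)} ≃
      {C : Graph // (∀ v ∈ nodes C, v ∉ ports G) ∧ IsAlternating G C W} where
  toFun W' :=
    have hports := hW.notMem_ports_of_mem_nodes_symmDiff W'.2.1 W'.2.2.symm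
    ⟨W ∆ W', hports, hW.isAlternating_symmDiff W'.2.1 hports⟩
  invFun C := ⟨W ∆ C, C.2.2.isKekule_symmDiff hW, rest_symmDiff_of_notMem C.2.1⟩
  left_inv W' := Subtype.ext (symmDiff_symmDiff_cancel_left W W'.1)
  right_inv C := Subtype.ext (symmDiff_symmDiff_cancel_left W C.1)

end Flip

theorem statement2_general (G : Graph) (g : Finset Node)
    (n : ℕ) (hn : n = Nat.card {W : Graph // IsKekule G W ∧ rest W (ports G) = g})
    (W : Graph) (hW : IsKekule G W) (hWP : rest W (ports G) = g) :
    Nat.card {C : Graph // (∀ v ∈ nodes C, v ∉ ports G) ∧ IsAlternating G C W} = n := by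
  subst hn hWP
  exact (Nat.card_congr (kekuleEquivAlternating hW)).symm

/-- If `n` is the number of Kekulé states of `G` with port
assignment `g`, then for every Kekulé state `W` with `W|P = g` there are
precisely `n` curves `C`, none of whose nodes is a port of `G`, such that
`(C, W)` is an alternating curve. -/
theorem statement2 (G : Graph) (hG : IsGraph G)
    (g : Finset Node) (hg : g ⊆ ports G)
    (n : ℕ) (hn : n = Nat.card {W : Graph // IsKekule G W ∧ rest W (ports G) = g})
    (W : Graph) (hW : IsKekule G W) (hWP : rest W (ports G) = g) :
    Nat.card {C : Graph // (∀ v ∈ nodes C, v ∉ ports G) ∧ IsAlternating G C W} = n :=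
  statement2_general G g n hn W hW hWP
end Kekule
end

section
/- Let K be a Kekulé cell over a finite set P and let g ⊆ P. Then the translated cell g ⊕ K = { g ⊕ k | k ∈ K } is also a Kekulé cell over P. -/
open scoped symmDiff

namespace Kekule

/-!
Since `g ∆ k = {p₁} ∆ (⋯ ∆ ({pₙ} ∆ k))` for `g = {p₁, …, pₙ}`, it suffices to flip a single
port `p`. Attach a pendant edge `{p, q}` at `p`, with `q` a fresh node: `p` becomes internal and
must be covered exactly once, so the new port `q` is occupied exactly when `p` was free.
Renaming `p ↔ q` restores the port set, and the Kekulé cell becomes `{p} ∆ K`.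
-/
open Function

section Degree

variable {G W : Graph} {v : Node}

lemma mem_nodes_iff_deg_ne_zero : v ∈ nodes G ↔ deg G v ≠ 0 := by
  simp [nodes, deg, Finset.card_eq_zero, Finset.filter_eq_empty_iff]

lemma mem_ports_iff : v ∈ ports G ↔ deg G v = 1 := by
  simp only [ports, Finset.mem_filter, mem_nodes_iff_deg_ne_zero]
  omega

lemma mem_internal_iff_s4 : v ∈ internal G ↔ deg G v ≠ 0 ∧ deg G v ≠ 1 := by
  simp only [internal, Finset.mem_filter, mem_nodes_iff_deg_ne_zero]

lemma mem_rest_iff {P : Finset Node} : v ∈ rest W P ↔ v ∈ P ∧ deg W v ≠ 0 := by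
  simp only [rest, Finset.mem_inter, mem_nodes_iff_deg_ne_zero]

lemma deg_mono (h : W ⊆ G) (v : Node) : deg W v ≤ deg G v :=
  Finset.card_le_card (Finset.filter_subset_filter _ h)

lemma deg_insert {e : Finset Node} (h : e ∉ G) (v : Node) :
    deg (insert e G) v = (if v ∈ e then 1 else 0) + deg G v := by
  rw [deg, deg, Finset.filter_insert]
  split_ifs
  · rw [Finset.card_insert_of_notMem (fun he => h (Finset.mem_of_mem_filter e he))]
    omega
  · omega

lemma deg_eq_ite_add_deg_erase (W : Graph) (e : Finset Node) (v : Node) :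
    deg W v = (if e ∈ W ∧ v ∈ e then 1 else 0) + deg (W.erase e) v := by
  by_cases he : e ∈ W
  · conv_lhs => rw [← Finset.insert_erase he]
    rw [deg_insert (Finset.notMem_erase e W)]
    simp [he]
  · simp [he]

end Degree

section Relabel

def relabel (σ : Equiv.Perm Node) (G : Graph) : Graph := G.map σ.finsetCongr.toEmbedding

variable (σ : Equiv.Perm Node) {G W : Graph}

lemma mem_relabel {e : Finset Node} : e ∈ relabel σ G ↔ e.map σ.symm.toEmbedding ∈ G :=
  Finset.mem_map_equiv

lemma relabel_symm_relabel (W : Graph) : relabel σ (relabel σ.symm W) = W :=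
  σ.finsetCongr.finsetCongr.apply_symm_apply W

lemma relabel_subset_relabel_iff : relabel σ W ⊆ relabel σ G ↔ W ⊆ G :=
  Finset.map_subset_map

lemma deg_relabel (W : Graph) (v : Node) : deg (relabel σ W) v = deg W (σ.symm v) := by
  simp [deg, relabel, Finset.filter_map, comp_def, Finset.mem_map_equiv]

lemma mem_ports_relabel {v : Node} : v ∈ ports (relabel σ G) ↔ σ.symm v ∈ ports G := by
  rw [mem_ports_iff, mem_ports_iff, deg_relabel]

lemma mem_internal_relabel {v : Node} : v ∈ internal (relabel σ G) ↔ σ.symm v ∈ internal G := by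
  rw [mem_internal_iff_s4, mem_internal_iff_s4, deg_relabel]

lemma ports_relabel : ports (relabel σ G) = (ports G).map σ.toEmbedding := by
  ext v
  rw [mem_ports_relabel, Finset.mem_map_equiv]

lemma isKekule_relabel_iff : IsKekule (relabel σ G) (relabel σ W) ↔ IsKekule G W := by
  simp only [IsKekule, relabel_subset_relabel_iff, mem_internal_relabel, deg_relabel]
  refine and_congr_right fun _ => ⟨fun h v hv => ?_, fun h v hv => h _ hv⟩
  simpa using h (σ v) (by simpa using hv)

lemma rest_relabel (W : Graph) (P : Finset Node) :
    rest (relabel σ W) (P.map σ.toEmbedding) = (rest W P).map σ.toEmbedding := by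
  ext v
  simp only [mem_rest_iff, Finset.mem_map_equiv, deg_relabel]

lemma KP_relabel : KP (relabel σ G) = (·.map σ.toEmbedding) '' KP G := by
  ext k
  constructor
  · rintro ⟨W', hW', rfl⟩
    rw [← relabel_symm_relabel σ W', isKekule_relabel_iff] at hW'
    refine ⟨_, ⟨_, hW', rfl⟩, ?_⟩
    dsimp only
    rw [← rest_relabel, ← ports_relabel, relabel_symm_relabel]
  · rintro ⟨_, ⟨W, hW, rfl⟩, rfl⟩
    exact ⟨relabel σ W, (isKekule_relabel_iff σ).mpr hW, by rw [ports_relabel, rest_relabel]⟩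

lemma IsGraph.relabel (hG : IsGraph G) : IsGraph (relabel σ G) := by
  intro e he
  rw [mem_relabel] at he
  simpa using hG _ he

lemma IsKekuleCell.map {P : Finset Node} {K : Set (Finset Node)} (hK : IsKekuleCell P K) :
    IsKekuleCell (P.map σ.toEmbedding) ((·.map σ.toEmbedding) '' K) := by
  obtain ⟨G, hG, rfl, rfl⟩ := hK
  exact ⟨relabel σ G, hG.relabel σ, ports_relabel σ, KP_relabel σ⟩

end Relabel

section PendantEdge

variable {G W' : Graph} {p q : Node}

lemma pair_notMem_of_notMem_nodes (hq : q ∉ nodes G) : ({p, q} : Finset Node) ∉ G :=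
  fun h => hq (Finset.mem_biUnion.mpr ⟨_, h, by simp⟩)

lemma deg_eq_zero_of_notMem_nodes (hq : q ∉ nodes G) : deg G q = 0 := by
  rwa [mem_nodes_iff_deg_ne_zero, not_not] at hq

variable (hp : p ∈ ports G) (hq : q ∉ nodes G)
include hp hq

lemma ne_of_mem_ports_of_notMem_nodes : p ≠ q := by
  rintro rfl
  exact hq (Finset.mem_of_mem_filter p hp)

lemma ports_insert_pendant :
    ports (insert {p, q} G) = (ports G).map (Equiv.swap p q).toEmbedding := by
  have hpq := ne_of_mem_ports_of_notMem_nodes hp hq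
  have hq0 := deg_eq_zero_of_notMem_nodes hq
  rw [mem_ports_iff] at hp
  ext v
  rw [mem_ports_iff, deg_insert (pair_notMem_of_notMem_nodes hq), Finset.mem_map_equiv,
    Equiv.symm_swap, mem_ports_iff]
  rcases eq_or_ne v p with rfl | hvp
  · simp [hp, hq0]
  rcases eq_or_ne v q with rfl | hvq
  · simp [hp, hq0]
  · simp [hvp, hvq, Equiv.swap_apply_of_ne_of_ne hvp hvq]

lemma mem_internal_insert_pendant {v : Node} :
    v ∈ internal (insert {p, q} G) ↔ v = p ∨ v ∈ internal G := by
  have hpq := ne_of_mem_ports_of_notMem_nodes hp hq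
  have hq0 := deg_eq_zero_of_notMem_nodes hq
  rw [mem_ports_iff] at hp
  rw [mem_internal_iff_s4, mem_internal_iff_s4, deg_insert (pair_notMem_of_notMem_nodes hq)]
  rcases eq_or_ne v p with rfl | hvp
  · simp [hp]
  rcases eq_or_ne v q with rfl | hvq
  · simp [hq0, hpq.symm]
  · simp [hvp, hvq]

lemma isKekule_insert_pendant_iff (hW' : W' ⊆ insert {p, q} G) :
    IsKekule (insert {p, q} G) W' ↔
      IsKekule G (W'.erase {p, q}) ∧ ({p, q} ∈ W' ↔ deg (W'.erase {p, q}) p = 0) := by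
  have hWG : W'.erase {p, q} ⊆ G := Finset.subset_insert_iff.mp hW'
  have hpW : deg (W'.erase {p, q}) p ≤ 1 := (deg_mono hWG p).trans (mem_ports_iff.mp hp).le
  have hdeg_p : deg W' p = 1 ↔ (({p, q} : Finset Node) ∈ W' ↔ deg (W'.erase {p, q}) p = 0) := by
    rw [deg_eq_ite_add_deg_erase W' {p, q} p]
    by_cases hpair : ({p, q} : Finset Node) ∈ W'
    · simp [hpair]
    · rw [Finset.erase_eq_of_notMem hpair] at hpW ⊢
      simp only [hpair, false_and, if_false, zero_add, false_iff]
      omega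
  have hdeg_internal : ∀ v ∈ internal G, deg W' v = deg (W'.erase {p, q}) v := by
    intro v hv
    have hvp : v ≠ p := by
      rintro rfl
      exact (mem_internal_iff_s4.mp hv).2 (mem_ports_iff.mp hp)
    have hvq : v ≠ q := by
      rintro rfl
      exact hq (Finset.mem_of_mem_filter v hv)
    simp [deg_eq_ite_add_deg_erase W' {p, q} v, hvp, hvq]
  simp only [IsKekule, hW', hWG, true_and, mem_internal_insert_pendant hp hq]
  constructor
  · intro h
    exact ⟨fun v hv => hdeg_internal v hv ▸ h v (Or.inr hv), hdeg_p.mp (h p (Or.inl rfl))⟩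
  · rintro ⟨h, hpair⟩ v (hvp | hv)
    · exact hvp ▸ hdeg_p.mpr hpair
    · exact hdeg_internal v hv ▸ h v hv

lemma rest_insert_pendant (hW' : W' ⊆ insert {p, q} G)
    (hpair : {p, q} ∈ W' ↔ deg (W'.erase {p, q}) p = 0) :
    rest W' (ports (insert {p, q} G)) =
      ({p} ∆ rest (W'.erase {p, q}) (ports G)).map (Equiv.swap p q).toEmbedding := by
  have hpq := ne_of_mem_ports_of_notMem_nodes hp hq
  have hq0 : deg (W'.erase {p, q}) q = 0 :=
    Nat.eq_zero_of_le_zero ((deg_mono (Finset.subset_insert_iff.mp hW') q).trans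
      (deg_eq_zero_of_notMem_nodes hq).le)
  have hqP : q ∉ ports G := fun h => hq (Finset.mem_of_mem_filter q h)
  ext v
  rw [ports_insert_pendant hp hq, Finset.mem_map_equiv, mem_rest_iff, Finset.mem_map_equiv,
    deg_eq_ite_add_deg_erase W' {p, q} v, Finset.mem_symmDiff, mem_rest_iff, Equiv.symm_swap]
  by_cases hvp : v = p
  · simp [hvp, hpq, hpq.symm, hqP]
  by_cases hvq : v = q
  · rw [hvq]
    by_cases hpair' : ({p, q} : Finset Node) ∈ W' <;> simp_all
  · simp [hvp, hvq, Equiv.swap_apply_of_ne_of_ne hvp hvq]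

lemma KP_insert_pendant :
    KP (insert {p, q} G) = (fun k => ({p} ∆ k).map (Equiv.swap p q).toEmbedding) '' KP G := by
  have hpair_G := pair_notMem_of_notMem_nodes (p := p) hq
  ext k
  constructor
  · rintro ⟨W', hW', rfl⟩
    obtain ⟨hW, hpair⟩ := (isKekule_insert_pendant_iff hp hq hW'.1).mp hW'
    exact ⟨_, ⟨_, hW, rfl⟩, (rest_insert_pendant hp hq hW'.1 hpair).symm⟩
  · rintro ⟨_, ⟨W, hW, rfl⟩, rfl⟩
    have hpair_W : ({p, q} : Finset Node) ∉ W := fun h => hpair_G (hW.1 h)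
    -- the new edge `{p, q}` is used exactly when `p` is left uncovered by `W`
    set W' := if deg W p = 0 then insert {p, q} W else W with hW'_def
    have hW'G : W' ⊆ insert {p, q} G := by
      rw [hW'_def]
      split_ifs
      · exact Finset.insert_subset_insert _ hW.1
      · exact hW.1.trans (Finset.subset_insert _ _)
    have hW'_erase : W'.erase {p, q} = W := by
      rw [hW'_def]
      split_ifs
      · exact Finset.erase_insert hpair_W
      · exact Finset.erase_eq_of_notMem hpair_W
    have hpair : ({p, q} : Finset Node) ∈ W' ↔ deg (W'.erase {p, q}) p = 0 := by
      rw [hW'_erase, hW'_def]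
      split_ifs with h <;> simp [h, hpair_W]
    refine ⟨W', (isKekule_insert_pendant_iff hp hq hW'G).mpr ⟨hW'_erase ▸ hW, hpair⟩, ?_⟩
    rw [rest_insert_pendant hp hq hW'G hpair, hW'_erase]

lemma IsGraph.insert_pendant (hG : IsGraph G) : IsGraph (insert {p, q} G) := by
  intro e he
  rcases Finset.mem_insert.mp he with rfl | he
  · exact Finset.card_pair (ne_of_mem_ports_of_notMem_nodes hp hq)
  · exact hG e he

end PendantEdge

lemma IsKekuleCell.image_symmDiff_singleton {P : Finset Node} {K : Set (Finset Node)}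
    (hK : IsKekuleCell P K) {p : Node} (hp : p ∈ P) :
    IsKekuleCell P ((fun k => {p} ∆ k) '' K) := by
  obtain ⟨G, hG, rfl, rfl⟩ := hK
  obtain ⟨q, hq⟩ := Infinite.exists_notMem_finset (nodes G)
  have hcell : IsKekuleCell ((ports G).map (Equiv.swap p q).toEmbedding)
      ((fun k => ({p} ∆ k).map (Equiv.swap p q).toEmbedding) '' KP G) :=
    ⟨_, hG.insert_pendant hp hq, ports_insert_pendant hp hq, KP_insert_pendant hp hq⟩
  have hswap_swap (s : Finset Node) :
      (s.map (Equiv.swap p q).toEmbedding).map (Equiv.swap p q).toEmbedding = s := by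
    rw [Finset.map_map, ← Equiv.trans_toEmbedding, Equiv.swap_swap, Equiv.refl_toEmbedding,
      Finset.map_refl]
  simpa only [Set.image_image, hswap_swap] using hcell.map (Equiv.swap p q)

/-- A translate of a Kekulé cell is a Kekulé cell. -/
theorem statement4 (P : Finset Node) (K : Set (Finset Node))
    (hK : IsKekuleCell P K) (g : Finset Node) (hg : g ⊆ P) :
    IsKekuleCell P ((fun k => g ∆ k) '' K) := by
  induction g using Finset.induction_on with
  | empty =>
    rwa [show (fun k => (∅ : Finset Node) ∆ k) = id from funext bot_symmDiff, Set.image_id]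
  | insert a s ha ih =>
    have hflip := (ih ((Finset.subset_insert a s).trans hg)).image_symmDiff_singleton
      (hg (Finset.mem_insert_self a s))
    rw [Set.image_image] at hflip
    have hins : insert a s = {a} ∆ s :=
      (Finset.disjoint_singleton_left.mpr ha).symmDiff_eq_sup.symm
    simpa only [hins, symmDiff_assoc] using hflip
end Kekule
end
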